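/- For integers m\ge t\ge 0 and l\ge t, define \beta_{m,t,l} = \sum_{1\le i_1<\cdots<i_t\le l} (1-q^{2m})(1-q^{2m-2})\cdots(1-q^{2(m-t+1)}) \cdot q^{m(i_1-1)+(m-1)(i_2-i_1-1)+\cdots+(m-t+1)(i_t-i_{t-1}-1)+(m-t)(l-i_t)}. Then \beta_{m,t,l} = q^{(m-t)(l-t)} (1-q^{2m})(1-q^{2m-2})\cdots(1-q^{2(m-t+1)}) \binom{l}{t}_q, where \binom{l}{t}_q = (q)_l/((q)_t(q)_{l-t}) is the Gaussian binomial coefficient. -/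

import Mathlib

/-- `(q)_k = (1-q)(1-q^2)⋯(1-q^k)` -/
def qPoch (q : ℝ) (k : ℕ) : ℝ := ∏ i ∈ Finset.range k, (1 - q ^ (i + 1))

/-- Gaussian (q-)binomial coefficient `[n choose k]_q = (q)_n / ((q)_k (q)_{n-k})`. -/
noncomputable def qBinom (q : ℝ) (n k : ℕ) : ℝ := qPoch q n / (qPoch q k * qPoch q (n - k))

/-- The extended chain `0 = i_0 < i_1 < ⋯ < i_t < i_{t+1} = l+1`, where
`i_1 < ⋯ < i_t` is the increasing enumeration of the `t`-element subset `A ⊆ {1,…,l}`. -/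
def chainExt (l t : ℕ) (A : Finset ℕ) (j : ℕ) : ℕ :=
  if j = 0 then 0
  else if j ≤ t then (Finset.sort A (· ≤ ·)).getD (j - 1) 0
  else l + 1

/-- The exponent `m(i_1-1) + (m-1)(i_2-i_1-1) + ⋯ + (m-t+1)(i_t-i_{t-1}-1) + (m-t)(l-i_t)`. -/
def ampExp (m t l : ℕ) (A : Finset ℕ) : ℕ :=
  ∑ r ∈ Finset.range (t + 1),
    (m - r) * (chainExt l t A (r + 1) - chainExt l t A r - 1)

/- ============ auxiliary material ============ -/

lemma qPoch_ne_zero (q : ℝ) (hq : |q| < 1) (k : ℕ) : qPoch q k ≠ 0 := by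
  unfold qPoch
  apply Finset.prod_ne_zero_iff.mpr
  intro i _
  have h1 : |q ^ (i + 1)| < 1 := by
    rw [abs_pow]; exact pow_lt_one₀ (abs_nonneg q) hq (Nat.succ_ne_zero i)
  have h2 : q ^ (i + 1) ≠ 1 := by
    intro h; rw [h] at h1; simp at h1
  exact sub_ne_zero.mpr (Ne.symm h2)

lemma qPoch_succ (q : ℝ) (k : ℕ) : qPoch q (k + 1) = qPoch q k * (1 - q ^ (k + 1)) := by
  unfold qPoch; rw [Finset.prod_range_succ]

lemma qPoch_zero (q : ℝ) : qPoch q 0 = 1 := by simp [qPoch]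

/-- q-Pascal recurrence. -/
lemma qBinom_pascal (q : ℝ) (hq : |q| < 1) (t s : ℕ) :
    qBinom q (t + s + 2) (t + 1)
      = qBinom q (t + s + 1) (t + 1) + q ^ (s + 1) * qBinom q (t + s + 1) t := by
  unfold qBinom
  have e1 : t + s + 2 - (t + 1) = s + 1 := by omega
  have e2 : t + s + 1 - (t + 1) = s := by omega
  have e3 : t + s + 1 - t = s + 1 := by omega
  rw [e1, e2, e3]
  rw [show t + s + 2 = (t + s + 1) + 1 from rfl, qPoch_succ q (t + s + 1),
    qPoch_succ q t, qPoch_succ q s]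
  have h1 := qPoch_ne_zero q hq t
  have h2 := qPoch_ne_zero q hq s
  have h3 := qPoch_ne_zero q hq (t + s + 1)
  have h4 : (1 - q ^ (t + 1)) ≠ 0 := by
    have := qPoch_ne_zero q hq (t + 1)
    rw [qPoch_succ] at this
    exact right_ne_zero_of_mul this
  have h5 : (1 - q ^ (s + 1)) ≠ 0 := by
    have := qPoch_ne_zero q hq (s + 1)
    rw [qPoch_succ] at this
    exact right_ne_zero_of_mul this
  field_simp
  ring

/- ===== chain lemmas ===== -/

lemma chain_zero (l t : ℕ) (A : Finset ℕ) : chainExt l t A 0 = 0 := rfl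

lemma chain_top (l t : ℕ) (A : Finset ℕ) : chainExt l t A (t + 1) = l + 1 := by
  unfold chainExt
  rw [if_neg (by omega), if_neg (by omega)]

lemma chain_eq_get (l t : ℕ) (A : Finset ℕ) {j : ℕ} (hj1 : 1 ≤ j) (hj2 : j ≤ t)
    (hlen : (Finset.sort A (· ≤ ·)).length = t) :
    chainExt l t A j = (Finset.sort A (· ≤ ·))[j - 1]'(by omega) := by
  unfold chainExt
  rw [if_neg (by omega), if_pos hj2, List.getD_eq_getElem _ _ (by omega)]

lemma chain_lt {t l : ℕ} {A : Finset ℕ} (hA : A ∈ Finset.powersetCard t (Finset.Icc 1 l))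
    {r : ℕ} (hr : r ≤ t) : chainExt l t A r < chainExt l t A (r + 1) := by
  obtain ⟨hsub, hcard⟩ := Finset.mem_powersetCard.mp hA
  have hlen : (Finset.sort A (· ≤ ·)).length = t := by
    rw [Finset.length_sort, hcard]
  have hmemA : ∀ (i : ℕ) (h : i < (Finset.sort A (· ≤ ·)).length),
      (Finset.sort A (· ≤ ·))[i] ∈ Finset.Icc 1 l := by
    intro i h
    exact hsub (by rw [← Finset.mem_sort (α := ℕ) (· ≤ ·)]; exact List.getElem_mem _)
  rcases Nat.eq_zero_or_pos r with rfl | hr0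
  · rw [chain_zero]
    rcases Nat.eq_zero_or_pos t with rfl | ht0
    · rw [chain_top]; omega
    · rw [chain_eq_get l t A le_rfl ht0 hlen]
      simp only [Nat.sub_self]
      have := hmemA 0 (by omega)
      rw [Finset.mem_Icc] at this
      omega
  · rcases Nat.lt_or_ge r t with hrt | hrt
    · rw [chain_eq_get l t A hr0 hr hlen, chain_eq_get l t A (by omega) (by omega) hlen]
      have hs := (Finset.sortedLT_sort A).strictMono_get
        (a := ⟨r - 1, by omega⟩) (b := ⟨r + 1 - 1, by omega⟩) (by simp [Fin.lt_def]; omega)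
      simpa [List.get_eq_getElem] using hs
    · have hrt' : r = t := le_antisymm hr hrt
      subst hrt'
      rw [chain_top, chain_eq_get l r A hr0 le_rfl hlen]
      have := hmemA (r - 1) (by omega)
      rw [Finset.mem_Icc] at this
      omega

lemma chain_ge {t l : ℕ} {A : Finset ℕ} (hA : A ∈ Finset.powersetCard t (Finset.Icc 1 l)) :
    ∀ j, j ≤ t + 1 → j ≤ chainExt l t A j := by
  intro j
  induction j with
  | zero => intro _; omega
  | succ n ih =>
    intro h
    have h1 := ih (by omega)
    have h2 := chain_lt hA (r := n) (by omega)
    omega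

lemma list_getD_sum : ∀ L : List ℕ, ∑ i ∈ Finset.range L.length, L.getD i 0 = L.sum := by
  intro L
  induction L with
  | nil => simp
  | cons a L ih =>
    rw [List.length_cons, Finset.sum_range_succ']
    have h1 : ∀ x, (a :: L).getD (x + 1) 0 = L.getD x 0 := fun x => rfl
    have h2 : (a :: L).getD 0 0 = a := rfl
    rw [Finset.sum_congr rfl fun x _ => h1 x, ih, h2, List.sum_cons, Nat.add_comm]

lemma chain_sum {t l : ℕ} {A : Finset ℕ} (hA : A ∈ Finset.powersetCard t (Finset.Icc 1 l)) :
    ∑ s ∈ Finset.range t, chainExt l t A (s + 1) = ∑ a ∈ A, a := by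
  obtain ⟨hsub, hcard⟩ := Finset.mem_powersetCard.mp hA
  have hlen : (Finset.sort A (· ≤ ·)).length = t := by
    rw [Finset.length_sort, hcard]
  have h1 : ∀ s ∈ Finset.range t, chainExt l t A (s + 1)
      = (Finset.sort A (· ≤ ·)).getD s 0 := by
    intro s hs
    rw [Finset.mem_range] at hs
    unfold chainExt
    rw [if_neg (by omega), if_pos (by omega)]
    simp
  rw [Finset.sum_congr rfl h1, ← hlen, list_getD_sum]
  have h2 := (Finset.sort_perm_toList A (· ≤ ·)).sum_eq
  rw [h2]
  have h3 := Finset.sum_map_toList A (id : ℕ → ℕ)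
  simpa using h3

lemma sum_ge_T {t l : ℕ} {A : Finset ℕ} (hA : A ∈ Finset.powersetCard t (Finset.Icc 1 l)) :
    (∑ s ∈ Finset.range t, (s + 1)) ≤ ∑ a ∈ A, a := by
  rw [← chain_sum hA]
  apply Finset.sum_le_sum
  intro s hs
  rw [Finset.mem_range] at hs
  exact chain_ge hA (s + 1) (by omega)

/-- Abel-type summation identity. -/
lemma abel_sum (M : ℤ) (c : ℕ → ℤ) : ∀ t : ℕ,
    ∑ r ∈ Finset.range (t + 1), (M - r) * (c (r + 1) - c r - 1)
      = (∑ s ∈ Finset.range t, c (s + 1)) + (M - t) * c (t + 1) - M * c 0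
        - ∑ r ∈ Finset.range (t + 1), (M - r) := by
  intro t
  induction t with
  | zero => simp; ring
  | succ n ih =>
    simp only [Finset.sum_range_succ] at ih ⊢
    push_cast at ih ⊢
    linear_combination ih

/-- Gauss sum. -/
lemma gaussT (t : ℕ) : (∑ s ∈ Finset.range t, (s + 1)) * 2 = t * (t + 1) := by
  induction t with
  | zero => simp
  | succ n ih =>
    rw [Finset.sum_range_succ, Nat.add_mul, ih]
    ring

/-- Key reduction of the amplitude exponent. -/
lemma ampExp_eq {m t l : ℕ} {A : Finset ℕ} (htm : t ≤ m) (htl : t ≤ l)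
    (hA : A ∈ Finset.powersetCard t (Finset.Icc 1 l)) :
    ampExp m t l A = (m - t) * (l - t) + ((∑ a ∈ A, a) - ∑ s ∈ Finset.range t, (s + 1)) := by
  have hz : (ampExp m t l A : ℤ)
      = ∑ r ∈ Finset.range (t + 1),
          ((m : ℤ) - r) * ((chainExt l t A (r + 1) : ℤ) - chainExt l t A r - 1) := by
    unfold ampExp
    rw [Nat.cast_sum]
    apply Finset.sum_congr rfl
    intro r hr
    rw [Finset.mem_range] at hr
    have h1 : r ≤ t := by omega
    have h2 : chainExt l t A r + 1 ≤ chainExt l t A (r + 1) := chain_lt hA h1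
    rw [Nat.sub_sub, Nat.cast_mul, Nat.cast_sub (by omega : r ≤ m), Nat.cast_sub h2]
    push_cast
    ring
  rw [abel_sum (m : ℤ) (fun j => (chainExt l t A j : ℤ)) t] at hz
  simp only [chain_zero, chain_top, Nat.cast_zero, mul_zero, sub_zero] at hz
  have hS : (∑ s ∈ Finset.range t, (chainExt l t A (s + 1) : ℤ)) = ((∑ a ∈ A, a : ℕ) : ℤ) := by
    rw [← chain_sum hA]; push_cast; rfl
  have hsum2 : ∑ r ∈ Finset.range (t + 1), ((m : ℤ) - r)
      = (t + 1) * m - ((∑ s ∈ Finset.range t, (s + 1) : ℕ) : ℤ) := by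
    rw [Finset.sum_sub_distrib, Finset.sum_const, Finset.card_range]
    have : ∑ r ∈ Finset.range (t + 1), (r : ℤ) = ((∑ s ∈ Finset.range t, (s + 1) : ℕ) : ℤ) := by
      rw [Finset.sum_range_succ']
      push_cast
      simp
    rw [this]
    push_cast
    ring
  rw [hS, hsum2] at hz
  -- now conclude over ℤ
  have hTle := sum_ge_T hA
  have hT2 : ((∑ s ∈ Finset.range t, (s + 1) : ℕ) : ℤ) * 2 = (t : ℤ) * (t + 1) := by
    exact_mod_cast gaussT t
  zify [htm, htl, hTle]
  push_cast at hz hT2 ⊢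
  linear_combination hz + hT2

/- ===== the Gaussian-binomial generating sum ===== -/

noncomputable def Gsum (q : ℝ) (t l : ℕ) : ℝ :=
  ∑ A ∈ Finset.powersetCard t (Finset.Icc 1 l),
    q ^ ((∑ a ∈ A, a) - ∑ s ∈ Finset.range t, (s + 1))

lemma Icc_succ (l : ℕ) : Finset.Icc 1 (l + 1) = insert (l + 1) (Finset.Icc 1 l) := by
  ext x
  simp [Finset.mem_Icc, Finset.mem_insert]
  omega

lemma Gsum_rec (q : ℝ) (t l : ℕ) (h : t ≤ l) :
    Gsum q (t + 1) (l + 1) = Gsum q (t + 1) l + q ^ (l - t) * Gsum q t l := by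
  unfold Gsum
  rw [Icc_succ l, Finset.powersetCard_succ_insert (by simp) t]
  have hdisj : Disjoint (Finset.powersetCard (t + 1) (Finset.Icc 1 l))
      ((Finset.powersetCard t (Finset.Icc 1 l)).image (insert (l + 1))) := by
    rw [Finset.disjoint_left]
    intro B hB hB2
    obtain ⟨hsub, _⟩ := Finset.mem_powersetCard.mp hB
    obtain ⟨C, hC, rfl⟩ := Finset.mem_image.mp hB2
    have : l + 1 ∈ Finset.Icc 1 l := hsub (Finset.mem_insert_self _ _)
    simp [Finset.mem_Icc] at this
  rw [Finset.sum_union hdisj]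
  congr 1
  rw [Finset.sum_image]
  · rw [Finset.mul_sum]
    apply Finset.sum_congr rfl
    intro B hB
    obtain ⟨hsub, hcard⟩ := Finset.mem_powersetCard.mp hB
    have hnot : l + 1 ∉ B := by
      intro hmem
      have := hsub hmem
      simp [Finset.mem_Icc] at this
    rw [Finset.sum_insert hnot]
    have hTle := sum_ge_T hB
    have hTsucc : (∑ s ∈ Finset.range (t + 1), (s + 1))
        = (∑ s ∈ Finset.range t, (s + 1)) + (t + 1) := Finset.sum_range_succ _ _
    have hexp : (l + 1 + ∑ a ∈ B, a) - ∑ s ∈ Finset.range (t + 1), (s + 1)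
        = (l - t) + ((∑ a ∈ B, a) - ∑ s ∈ Finset.range t, (s + 1)) := by omega
    rw [hexp, pow_add]
  · intro B1 h1 B2 h2 heq
    have hn1 : l + 1 ∉ B1 := by
      intro hmem
      have := (Finset.mem_powersetCard.mp h1).1 hmem
      simp [Finset.mem_Icc] at this
    have hn2 : l + 1 ∉ B2 := by
      intro hmem
      have := (Finset.mem_powersetCard.mp h2).1 hmem
      simp [Finset.mem_Icc] at this
    have := congrArg (fun s => Finset.erase s (l + 1)) heq
    simpa [Finset.erase_insert, hn1, hn2] using this

lemma Gsum_eq_qBinom (q : ℝ) (hq : |q| < 1) : ∀ l t : ℕ, t ≤ l → Gsum q t l = qBinom q l t := by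
  intro l
  induction l with
  | zero =>
    intro t ht
    interval_cases t
    simp [Gsum, qBinom, qPoch]
  | succ n ih =>
    intro t ht
    match t with
    | 0 =>
      have h1 : Gsum q 0 (n + 1) = 1 := by
        simp [Gsum, Finset.powersetCard_zero]
      rw [h1]
      unfold qBinom
      rw [Nat.sub_zero, qPoch_zero, one_mul, div_self (qPoch_ne_zero q hq (n + 1))]
    | t' + 1 =>
      rcases Nat.lt_or_ge (t' + 1) (n + 1) with hlt | hge
      · -- t' + 1 ≤ n
        have ht'n : t' ≤ n := by omega
        rw [Gsum_rec q t' n ht'n, ih (t' + 1) (by omega), ih t' (by omega)]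
        have e1 : n + 1 = t' + (n - t' - 1) + 2 := by omega
        have e2 : n = t' + (n - t' - 1) + 1 := by omega
        have e3 : n - t' = (n - t' - 1) + 1 := by omega
        rw [e3, e1]
        rw [qBinom_pascal q hq t' (n - t' - 1)]
        rw [← e2]
      · -- t = n + 1
        obtain rfl : t' = n := by omega
        rw [Gsum_rec q t' t' le_rfl]
        have hempty : Gsum q (t' + 1) t' = 0 := by
          unfold Gsum
          rw [Finset.powersetCard_eq_empty.mpr (by rw [Nat.card_Icc]; omega)]
          simp
        rw [hempty, ih t' le_rfl, Nat.sub_self, pow_zero, zero_add, one_mul]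
        unfold qBinom
        rw [Nat.sub_self, Nat.sub_self, qPoch_zero, mul_one, mul_one,
          div_self (qPoch_ne_zero q hq t'), div_self (qPoch_ne_zero q hq (t' + 1))]

theorem stmt_8 (q : ℝ) (hq : |q| < 1) (m t l : ℕ) (htm : t ≤ m) (htl : t ≤ l) :
    ∑ A ∈ Finset.powersetCard t (Finset.Icc 1 l),
        (∏ j ∈ Finset.range t, (1 - q ^ (2 * (m - j)))) * q ^ ampExp m t l A
      = q ^ ((m - t) * (l - t)) * (∏ j ∈ Finset.range t, (1 - q ^ (2 * (m - j))))
          * qBinom q l t := by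
  have hsum : ∑ A ∈ Finset.powersetCard t (Finset.Icc 1 l), q ^ ampExp m t l A
      = q ^ ((m - t) * (l - t)) * Gsum q t l := by
    unfold Gsum
    rw [Finset.mul_sum]
    apply Finset.sum_congr rfl
    intro A hA
    rw [ampExp_eq htm htl hA, pow_add]
  rw [← Finset.mul_sum, hsum, Gsum_eq_qBinom q hq l t htl]
  ring
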